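/- Let k ≥ 0 and r = k + 1. Suppose a_2 is continuously differentiable with a_2(x) ≥ a_min > 0 on [a,b], a_0 is continuous with a_0 ≥ 0, and u is twice continuously differentiable on [a,b] and solves −(a_2 u′)′ + a_0 u = f on (a,b) with u(a) = 0 and u′(b) = 0. Let u_h ∈ S_h be the weak finite element solution. Then a_min ‖d_{w,r}Q_h u − d_{w,r}u_h‖_h ≤ ‖a_2 d_{w,r}Q_h u − π_h(a_2 u′)‖_h + ((b−a)+1) ‖a_0 (Q_h^0 u − u)‖_{L²(a,b)}. -/

import Mathlib

open MeasureTheory Set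

noncomputable section

/-- `p` is the discrete weak derivative of order `r` of the weak function
`(v0, vl, vr)` on the interval `(c, d)`: it is a polynomial of degree at most `r`
satisfying `∫ p q = -∫ v0 q' + vr q(d) - vl q(c)` for all polynomials `q` of
degree at most `r`. -/
def IsWeakDeriv (r : ℕ) (c d : ℝ) (v0 : ℝ → ℝ) (vl vr : ℝ) (p : Polynomial ℝ) : Prop :=
  p.degree ≤ (r : WithBot ℕ) ∧ ∀ q : Polynomial ℝ, q.degree ≤ (r : WithBot ℕ) →
    (∫ t in c..d, p.eval t * q.eval t) =
      -(∫ t in c..d, v0 t * q.derivative.eval t) + vr * q.eval d - vl * q.eval c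

/-- `p` is the L²(c,d)-orthogonal projection of `g` onto polynomials of degree at most `l`. -/
def IsL2Proj (l : ℕ) (c d : ℝ) (g : ℝ → ℝ) (p : Polynomial ℝ) : Prop :=
  p.degree ≤ (l : WithBot ℕ) ∧ ∀ q : Polynomial ℝ, q.degree ≤ (l : WithBot ℕ) →
    (∫ t in c..d, (g t - p.eval t) * q.eval t) = 0

/-- `x 0 = a < x 1 < ⋯ < x (N-1) = b` is a partition of `(a,b)`. -/
def IsPartition (N : ℕ) (a b : ℝ) (x : ℕ → ℝ) : Prop :=
  2 ≤ N ∧ x 0 = a ∧ x (N - 1) = b ∧ ∀ i < N - 1, x i < x (i + 1)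

/-- Membership in the weak finite element space `S_h`: on each of the `N - 1` elements the
interior component is a polynomial of degree at most `k`, the nodal values are single
valued, and the nodal value at the left endpoint vanishes. -/
def MemSh (k N : ℕ) (v0 : ℕ → Polynomial ℝ) (vn : ℕ → ℝ) : Prop :=
  (∀ i < N - 1, (v0 i).degree ≤ (k : WithBot ℕ)) ∧ vn 0 = 0

/-- `D i` is the discrete weak derivative of order `r` of the weak finite element function
`(v0, vn)` on the `i`-th element `(x i, x (i+1))`. -/
def IsWeakDerivFam (r N : ℕ) (x : ℕ → ℝ) (v0 : ℕ → Polynomial ℝ) (vn : ℕ → ℝ)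
    (D : ℕ → Polynomial ℝ) : Prop :=
  ∀ i < N - 1, IsWeakDeriv r (x i) (x (i + 1)) (fun t => (v0 i).eval t) (vn i) (vn (i + 1)) (D i)

/-- `(u0, un)` with discrete weak derivatives `Du` is a weak finite element solution:
it belongs to `S_h` and satisfies
`(a2 d_w u_h, d_w v)_h + (a0 u_h⁰, v⁰) = (f, v⁰)` for all `v ∈ S_h`. -/
def IsWFESol (k r N : ℕ) (x : ℕ → ℝ) (a2 a0 f : ℝ → ℝ)
    (u0 : ℕ → Polynomial ℝ) (un : ℕ → ℝ) (Du : ℕ → Polynomial ℝ) : Prop :=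
  MemSh k N u0 un ∧ IsWeakDerivFam r N x u0 un Du ∧
  ∀ (v0 : ℕ → Polynomial ℝ) (vn : ℕ → ℝ) (Dv : ℕ → Polynomial ℝ),
    MemSh k N v0 vn → IsWeakDerivFam r N x v0 vn Dv →
    ((∑ i ∈ Finset.range (N - 1), ∫ t in x i..x (i + 1), a2 t * (Du i).eval t * (Dv i).eval t)
      + ∑ i ∈ Finset.range (N - 1), ∫ t in x i..x (i + 1), a0 t * (u0 i).eval t * (v0 i).eval t)
      = ∑ i ∈ Finset.range (N - 1), ∫ t in x i..x (i + 1), f t * (v0 i).eval t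

/-- The Sobolev norm `‖u‖_m = (∑_{j=0}^m ∫_a^b |u^{(j)}|² dx)^{1/2}` of an `m`-times
continuously differentiable function on `[a,b]`. -/
def sobNorm (m : ℕ) (a b : ℝ) (u : ℝ → ℝ) : ℝ :=
  Real.sqrt (∑ j ∈ Finset.range (m + 1),
    ∫ t in a..b, (iteratedDerivWithin j u (Set.Icc a b) t) ^ 2)

/-- `u` solves the two-point boundary value problem
`-(a2 u')' + a0 u = f` on `(a,b)`, `u(a) = 0`, `u'(b) = 0`. -/
def SolvesBVP (a b : ℝ) (a2 a0 f u : ℝ → ℝ) : Prop :=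
  (∀ x ∈ Set.Ioo a b,
    -(derivWithin (fun t => a2 t * derivWithin u (Set.Icc a b) t) (Set.Icc a b) x)
      + a0 x * u x = f x) ∧
  u a = 0 ∧ derivWithin u (Set.Icc a b) b = 0

/-!
The error `w = Q_h u - u_h` lies in `S_h`. Because `π_h (a₂u')` interpolates the flux
`g = a₂u'` at the nodes and `(π_h g)' = P_h^k g'`, testing `-g' + a₀u = f` against `w⁰` yields the
error equation
`(a₂ d_w w, d_w w)_h + (a₀ w⁰, w⁰) = (a₂ d_w Q_h u - π_h g, d_w w)_h + (a₀ (Q_h⁰u - u), w⁰)`.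
Its left side is at least `a_min ‖d_w w‖²`, Cauchy–Schwarz bounds the right side by
`‖a₂ d_w Q_h u - π_h g‖ ‖d_w w‖ + ‖a₀ (Q_h⁰u - u)‖ ‖w⁰‖`, and the discrete Poincaré inequality
`‖w⁰‖ ≤ (b - a) ‖d_w w‖`, which holds because `w(a) = 0`, closes the estimate.
-/

open Polynomial

namespace Polynomial

def antiderivative (p : ℝ[X]) : ℝ[X] :=
  p.sum fun n c => C (c / (n + 1)) * X ^ (n + 1)

theorem derivative_antiderivative (p : ℝ[X]) : p.antiderivative.derivative = p := by
  conv_rhs => rw [← p.sum_C_mul_X_pow_eq]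
  simp only [antiderivative, Polynomial.sum, map_sum]
  refine Finset.sum_congr rfl fun n _ => ?_
  rw [derivative_C_mul_X_pow, Nat.add_sub_cancel]
  congr 1
  push_cast
  field_simp

theorem degree_antiderivative_le {p : ℝ[X]} {k : ℕ} (hp : p.degree ≤ k) :
    p.antiderivative.degree ≤ ((k + 1 : ℕ) : WithBot ℕ) := by
  refine (degree_sum_le _ _).trans (Finset.sup_le fun n hn => ?_)
  refine (degree_C_mul_X_pow_le _ _).trans ?_
  have : n ≤ k := by exact_mod_cast (le_degree_of_mem_supp n hn).trans hp
  exact_mod_cast Nat.succ_le_succ this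

theorem integral_eval_derivative (p : ℝ[X]) (c d : ℝ) :
    ∫ t in c..d, p.derivative.eval t = p.eval d - p.eval c :=
  intervalIntegral.integral_eq_sub_of_hasDerivAt (fun t _ => p.hasDerivAt t)
    (p.derivative.continuous.intervalIntegrable _ _)

end Polynomial

theorem integral_mul_le_sqrt_mul_sqrt {c d : ℝ} (hcd : c ≤ d) {f g : ℝ → ℝ}
    (hf : ContinuousOn f (Icc c d)) (hg : ContinuousOn g (Icc c d)) :
    ∫ t in c..d, f t * g t ≤ √(∫ t in c..d, f t ^ 2) * √(∫ t in c..d, g t ^ 2) := by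
  have hint : ∀ F : ℝ → ℝ, ContinuousOn F (Icc c d) → IntervalIntegrable F volume c d :=
    fun F hF => hF.intervalIntegrable_of_Icc hcd
  -- the quadratic `s ↦ ∫ (s g + f)²` is nonnegative, so its discriminant is not positive
  have hquad : ∀ s : ℝ, 0 ≤ (∫ t in c..d, g t ^ 2) * (s * s)
      + (2 * ∫ t in c..d, f t * g t) * s + ∫ t in c..d, f t ^ 2 := by
    intro s
    calc 0 ≤ ∫ t in c..d, (s * g t + f t) ^ 2 :=
          intervalIntegral.integral_nonneg hcd fun _ _ => sq_nonneg _
      _ = ∫ t in c..d, (s * s) * g t ^ 2 + ((2 * s) * (f t * g t) + f t ^ 2) := by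
        congr 1; ext t; ring
      _ = _ := by
        rw [intervalIntegral.integral_add (hint _ (by fun_prop)) (hint _ (by fun_prop)),
          intervalIntegral.integral_add (hint _ (by fun_prop)) (hint _ (by fun_prop)),
          intervalIntegral.integral_const_mul, intervalIntegral.integral_const_mul]
        ring
  have hdisc := discrim_le_zero hquad
  rw [discrim] at hdisc
  rw [← Real.sqrt_mul (intervalIntegral.integral_nonneg hcd fun _ _ => sq_nonneg _)]
  exact (le_abs_self _).trans (Real.abs_le_sqrt (by nlinarith))

theorem mul_le_of_mul_mul_self_le {c E R : ℝ} (hE : 0 ≤ E) (hR : 0 ≤ R)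
    (h : c * E * E ≤ R * E) : c * E ≤ R := by
  rcases hE.eq_or_lt with rfl | hE
  · simpa using hR
  · exact le_of_mul_le_mul_right h hE

namespace IsPartition

variable {N : ℕ} {a b : ℝ} {x : ℕ → ℝ}

theorem le_succ (hp : IsPartition N a b x) {i : ℕ} (hi : i < N - 1) : x i ≤ x (i + 1) :=
  (hp.2.2.2 i hi).le

theorem monotoneOn (hp : IsPartition N a b x) : MonotoneOn x (Iic (N - 1)) :=
  monotoneOn_of_le_succ ordConnected_Iic fun i _ _ hi => by
    rw [Order.succ_eq_add_one] at hi ⊢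
    exact hp.le_succ (Nat.lt_of_succ_le hi)

theorem Icc_subset (hp : IsPartition N a b x) {i : ℕ} (hi : i < N - 1) :
    Icc (x i) (x (i + 1)) ⊆ Icc a b := by
  refine Icc_subset_Icc ?_ ?_
  · rw [← hp.2.1]
    exact hp.monotoneOn (mem_Iic.mpr (Nat.zero_le _)) (mem_Iic.mpr hi.le) (Nat.zero_le _)
  · rw [← hp.2.2.1]
    exact hp.monotoneOn (mem_Iic.mpr hi) (mem_Iic.mpr le_rfl) hi

theorem lt (hp : IsPartition N a b x) : a < b := by
  have hN : 1 ≤ N - 1 := by have := hp.1; omega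
  rw [← hp.2.1, ← hp.2.2.1]
  exact (hp.2.2.2 0 hN).trans_le (hp.monotoneOn (mem_Iic.mpr hN) (mem_Iic.mpr le_rfl) hN)

theorem Ioo_subset (hp : IsPartition N a b x) {i : ℕ} (hi : i < N - 1) :
    Ioo (x i) (x (i + 1)) ⊆ Ioo a b := fun _ ht =>
  ⟨(hp.Icc_subset hi (left_mem_Icc.mpr (hp.le_succ hi))).1.trans_lt ht.1,
    ht.2.trans_le (hp.Icc_subset hi (right_mem_Icc.mpr (hp.le_succ hi))).2⟩

theorem intervalIntegrable (hp : IsPartition N a b x) {F : ℝ → ℝ}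
    (hF : ContinuousOn F (Icc a b)) {i : ℕ} (hi : i < N - 1) :
    IntervalIntegrable F volume (x i) (x (i + 1)) :=
  (hF.mono (hp.Icc_subset hi)).intervalIntegrable_of_Icc (hp.le_succ hi)

theorem sum_sub (hp : IsPartition N a b x) :
    ∑ i ∈ Finset.range (N - 1), (x (i + 1) - x i) = b - a := by
  rw [Finset.sum_range_sub, hp.2.1, hp.2.2.1]

theorem sum_integral_sq_nonneg (hp : IsPartition N a b x) (F : ℕ → ℝ → ℝ) :
    0 ≤ ∑ i ∈ Finset.range (N - 1), ∫ t in x i..x (i + 1), F i t ^ 2 :=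
  Finset.sum_nonneg fun _ hi =>
    intervalIntegral.integral_nonneg (hp.le_succ (Finset.mem_range.mp hi)) fun _ _ => sq_nonneg _

theorem sum_integral_sub {F G : ℕ → ℝ → ℝ} (hp : IsPartition N a b x)
    (hF : ∀ i < N - 1, ContinuousOn (F i) (Icc a b))
    (hG : ∀ i < N - 1, ContinuousOn (G i) (Icc a b)) :
    ∑ i ∈ Finset.range (N - 1), ∫ t in x i..x (i + 1), (F i t - G i t)
      = (∑ i ∈ Finset.range (N - 1), ∫ t in x i..x (i + 1), F i t)
        - ∑ i ∈ Finset.range (N - 1), ∫ t in x i..x (i + 1), G i t := by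
  rw [← Finset.sum_sub_distrib]
  refine Finset.sum_congr rfl fun i hi => ?_
  have hi := Finset.mem_range.mp hi
  exact intervalIntegral.integral_sub (hp.intervalIntegrable (hF i hi) hi)
    (hp.intervalIntegrable (hG i hi) hi)

theorem mul_sum_integral_sq_le (hp : IsPartition N a b x) {w : ℝ → ℝ} {m : ℝ}
    (hw : ∀ t ∈ Icc a b, m ≤ w t) (hwc : ContinuousOn w (Icc a b)) (F : ℕ → ℝ[X]) :
    m * ∑ i ∈ Finset.range (N - 1), ∫ t in x i..x (i + 1), (F i).eval t ^ 2
      ≤ ∑ i ∈ Finset.range (N - 1), ∫ t in x i..x (i + 1), w t * (F i).eval t * (F i).eval t := by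
  rw [Finset.mul_sum]
  refine Finset.sum_le_sum fun i hi => ?_
  have hi := Finset.mem_range.mp hi
  rw [← intervalIntegral.integral_const_mul]
  refine intervalIntegral.integral_mono_on (hp.le_succ hi)
    (hp.intervalIntegrable (by fun_prop) hi) (hp.intervalIntegrable (by fun_prop) hi)
    fun t ht => ?_
  rw [mul_assoc, ← sq]
  exact mul_le_mul_of_nonneg_right (hw t (hp.Icc_subset hi ht)) (sq_nonneg _)

theorem sum_integral_mul_le (hp : IsPartition N a b x) {F G : ℕ → ℝ → ℝ}
    (hF : ∀ i < N - 1, ContinuousOn (F i) (Icc a b))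
    (hG : ∀ i < N - 1, ContinuousOn (G i) (Icc a b)) :
    ∑ i ∈ Finset.range (N - 1), ∫ t in x i..x (i + 1), F i t * G i t
      ≤ √(∑ i ∈ Finset.range (N - 1), ∫ t in x i..x (i + 1), F i t ^ 2)
        * √(∑ i ∈ Finset.range (N - 1), ∫ t in x i..x (i + 1), G i t ^ 2) := by
  have hsq : ∀ (H : ℕ → ℝ → ℝ), ∀ i ∈ Finset.range (N - 1),
      0 ≤ ∫ t in x i..x (i + 1), H i t ^ 2 := fun H i hi =>
    intervalIntegral.integral_nonneg (hp.le_succ (Finset.mem_range.mp hi)) fun t _ => sq_nonneg _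
  calc _ ≤ ∑ i ∈ Finset.range (N - 1), √(∫ t in x i..x (i + 1), F i t ^ 2)
          * √(∫ t in x i..x (i + 1), G i t ^ 2) := by
        refine Finset.sum_le_sum fun i hi => ?_
        have hi := Finset.mem_range.mp hi
        exact integral_mul_le_sqrt_mul_sqrt (hp.le_succ hi)
          ((hF i hi).mono (hp.Icc_subset hi)) ((hG i hi).mono (hp.Icc_subset hi))
    _ ≤ _ := by
      refine (Real.sum_mul_le_sqrt_mul_sqrt _ _ _).trans_eq ?_
      rw [Finset.sum_congr rfl fun i hi => Real.sq_sqrt (hsq F i hi),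
        Finset.sum_congr rfl fun i hi => Real.sq_sqrt (hsq G i hi)]

theorem sum_integral_abs_le (hp : IsPartition N a b x) {F : ℕ → ℝ → ℝ}
    (hF : ∀ i < N - 1, ContinuousOn (F i) (Icc a b)) :
    ∑ i ∈ Finset.range (N - 1), ∫ t in x i..x (i + 1), |F i t|
      ≤ √(b - a) * √(∑ i ∈ Finset.range (N - 1), ∫ t in x i..x (i + 1), F i t ^ 2) := by
  have h := hp.sum_integral_mul_le (F := fun _ _ => 1) (G := fun i t => |F i t|)
    (fun _ _ => continuousOn_const) fun i hi => (hF i hi).abs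
  simp only [one_mul, one_pow, intervalIntegral.integral_const, smul_eq_mul, mul_one,
    sq_abs] at h
  rwa [hp.sum_sub] at h

end IsPartition

namespace IsWeakDeriv

variable {r k : ℕ} {c d vl vr : ℝ} {P D : ℝ[X]}

theorem sub {P' D' : ℝ[X]} {vl' vr' : ℝ} (h : IsWeakDeriv r c d (fun t => P.eval t) vl vr D)
    (h' : IsWeakDeriv r c d (fun t => P'.eval t) vl' vr' D') :
    IsWeakDeriv r c d (fun t => (P - P').eval t) (vl - vl') (vr - vr') (D - D') := by
  refine ⟨(degree_sub_le _ _).trans (max_le h.1 h'.1), fun q hq => ?_⟩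
  have hsub : ∀ A B p : ℝ[X], ∫ t in c..d, (A - B).eval t * p.eval t
      = (∫ t in c..d, A.eval t * p.eval t) - ∫ t in c..d, B.eval t * p.eval t := fun A B p => by
    rw [← intervalIntegral.integral_sub (Continuous.intervalIntegrable (by fun_prop) _ _)
      (Continuous.intervalIntegrable (by fun_prop) _ _)]
    simp only [eval_sub, sub_mul]
  beta_reduce
  rw [hsub, hsub, h.2 q hq, h'.2 q hq]
  ring

theorem integral_eq_sub (h : IsWeakDeriv r c d (fun t => P.eval t) vl vr D) :
    ∫ t in c..d, D.eval t = vr - vl := by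
  simpa using h.2 1 (degree_one_le.trans (by exact_mod_cast Nat.zero_le r))

theorem integral_mul_add_integral_mul (h : IsWeakDeriv (k + 1) c d (fun t => P.eval t) vl vr D)
    (hP : P.degree ≤ k) {φ : ℝ[X]} (hφ : φ.degree ≤ ((k + 1 : ℕ) : WithBot ℕ)) {G : ℝ → ℝ}
    (hφG : ∀ q : ℝ[X], q.degree ≤ k →
      ∫ t in c..d, φ.derivative.eval t * q.eval t = ∫ t in c..d, G t * q.eval t) :
    (∫ t in c..d, φ.eval t * D.eval t) + ∫ t in c..d, G t * P.eval t
      = vr * φ.eval d - vl * φ.eval c := by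
  have hD := h.2 φ hφ
  simp only [mul_comm (D.eval _), mul_comm (P.eval _), hφG P hP] at hD
  linarith

/-- Test the weak derivative against an antiderivative of `P` and integrate `∫ W' q` by parts. -/
theorem integral_sq_eq (h : IsWeakDeriv (k + 1) c d (fun t => P.eval t) vl vr D)
    (hP : P.degree ≤ k) {W : ℝ[X]} (hW : W.derivative = D) (hWc : W.eval c = vl) :
    ∫ t in c..d, P.eval t ^ 2 = ∫ t in c..d, W.eval t * P.eval t := by
  have hWd : W.eval d = vr := by
    have := W.integral_eval_derivative c d
    rw [hW, h.integral_eq_sub, hWc] at this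
    linarith
  set q := P.antiderivative
  have hq : q.derivative = P := P.derivative_antiderivative
  have hweak := h.2 q (degree_antiderivative_le hP)
  have hparts := intervalIntegral.integral_mul_deriv_eq_deriv_mul (a := c) (b := d)
    (fun t _ => W.hasDerivAt t) (fun t _ => q.hasDerivAt t)
    (W.derivative.continuous.intervalIntegrable _ _)
    (q.derivative.continuous.intervalIntegrable _ _)
  rw [hq] at hweak hparts
  rw [hW, hWc, hWd] at hparts
  simp only [sq]
  linarith

theorem integral_sq_le (h : IsWeakDeriv (k + 1) c d (fun t => P.eval t) vl vr D)
    (hP : P.degree ≤ k) (hcd : c ≤ d) {M : ℝ} (hM : |vl| + ∫ t in c..d, |D.eval t| ≤ M) :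
    ∫ t in c..d, P.eval t ^ 2 ≤ M * ∫ t in c..d, |P.eval t| := by
  set W := D.antiderivative + C (vl - D.antiderivative.eval c)
  have hW : W.derivative = D := by simp [W, derivative_antiderivative]
  have hWc : W.eval c = vl := by simp [W]
  have hWM : ∀ t ∈ Icc c d, |W.eval t| ≤ M := by
    intro t ht
    have hWt : W.eval t = vl + ∫ s in c..t, D.eval s := by
      rw [← hW, W.integral_eval_derivative, hWc]
      ring
    have hDt : |∫ s in c..t, D.eval s| ≤ ∫ s in c..d, |D.eval s| :=
      (intervalIntegral.abs_integral_le_integral_abs ht.1).trans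
        (intervalIntegral.integral_mono_interval le_rfl ht.1 ht.2
          (Filter.Eventually.of_forall fun s => abs_nonneg _)
          (Continuous.intervalIntegrable (by fun_prop) _ _))
    rw [hWt]
    exact (abs_add_le _ _).trans (by linarith)
  rw [h.integral_sq_eq hP hW hWc, ← intervalIntegral.integral_const_mul]
  refine intervalIntegral.integral_mono_on hcd (Continuous.intervalIntegrable (by fun_prop) _ _)
    (Continuous.intervalIntegrable (by fun_prop) _ _) fun t ht => ?_
  calc W.eval t * P.eval t ≤ |W.eval t| * |P.eval t| := (le_abs_self _).trans_eq (abs_mul _ _)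
    _ ≤ M * |P.eval t| := mul_le_mul_of_nonneg_right (hWM t ht) (abs_nonneg _)

end IsWeakDeriv

theorem IsWeakDerivFam.abs_add_integral_abs_le {r N : ℕ} {a b : ℝ} {x : ℕ → ℝ}
    (hp : IsPartition N a b x) {v0 : ℕ → ℝ[X]} {vn : ℕ → ℝ} {Dv : ℕ → ℝ[X]}
    (hDv : IsWeakDerivFam r N x v0 vn Dv) (hvn : vn 0 = 0) {i : ℕ} (hi : i < N - 1) :
    |vn i| + ∫ t in x i..x (i + 1), |(Dv i).eval t|
      ≤ ∑ j ∈ Finset.range (N - 1), ∫ t in x j..x (j + 1), |(Dv j).eval t| := by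
  have hvi : vn i = ∑ j ∈ Finset.range i, ∫ t in x j..x (j + 1), (Dv j).eval t := by
    rw [Finset.sum_congr rfl fun j hj =>
        (hDv j ((Finset.mem_range.mp hj).trans hi)).integral_eq_sub,
      Finset.sum_range_sub, hvn, sub_zero]
  have habs : |vn i| ≤ ∑ j ∈ Finset.range i, ∫ t in x j..x (j + 1), |(Dv j).eval t| := by
    rw [hvi]
    refine (Finset.abs_sum_le_sum_abs _ _).trans (Finset.sum_le_sum fun j hj => ?_)
    exact intervalIntegral.abs_integral_le_integral_abs
      (hp.le_succ ((Finset.mem_range.mp hj).trans hi))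
  have hpartial : ∑ j ∈ Finset.range (i + 1), ∫ t in x j..x (j + 1), |(Dv j).eval t|
      ≤ ∑ j ∈ Finset.range (N - 1), ∫ t in x j..x (j + 1), |(Dv j).eval t| :=
    Finset.sum_le_sum_of_subset_of_nonneg (Finset.range_subset_range.mpr hi) fun j hj _ =>
      intervalIntegral.integral_nonneg (hp.le_succ (Finset.mem_range.mp hj)) fun _ _ =>
        abs_nonneg _
  rw [Finset.sum_range_succ] at hpartial
  linarith

theorem discrete_poincare {k N : ℕ} {a b : ℝ} {x : ℕ → ℝ} (hp : IsPartition N a b x)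
    {v0 : ℕ → ℝ[X]} {vn : ℕ → ℝ} {Dv : ℕ → ℝ[X]} (hv : MemSh k N v0 vn)
    (hDv : IsWeakDerivFam (k + 1) N x v0 vn Dv) :
    √(∑ i ∈ Finset.range (N - 1), ∫ t in x i..x (i + 1), (v0 i).eval t ^ 2)
      ≤ (b - a) * √(∑ i ∈ Finset.range (N - 1), ∫ t in x i..x (i + 1), (Dv i).eval t ^ 2) := by
  set M := ∑ j ∈ Finset.range (N - 1), ∫ t in x j..x (j + 1), |(Dv j).eval t|
  have hM : M ≤ √(b - a)
      * √(∑ i ∈ Finset.range (N - 1), ∫ t in x i..x (i + 1), (Dv i).eval t ^ 2) :=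
    hp.sum_integral_abs_le fun i _ => by fun_prop
  set V := √(∑ i ∈ Finset.range (N - 1), ∫ t in x i..x (i + 1), (v0 i).eval t ^ 2)
  have hVsq : V * V ≤ (b - a)
      * √(∑ i ∈ Finset.range (N - 1), ∫ t in x i..x (i + 1), (Dv i).eval t ^ 2) * V := by
    rw [Real.mul_self_sqrt (hp.sum_integral_sq_nonneg _)]
    calc _ ≤ M * ∑ i ∈ Finset.range (N - 1), ∫ t in x i..x (i + 1), |(v0 i).eval t| := by
          rw [Finset.mul_sum]
          refine Finset.sum_le_sum fun i hi => ?_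
          have hi := Finset.mem_range.mp hi
          exact (hDv i hi).integral_sq_le (hv.1 i hi) (hp.le_succ hi)
            (hDv.abs_add_integral_abs_le hp hv.2 hi)
      _ ≤ (√(b - a) * √(∑ i ∈ Finset.range (N - 1),
            ∫ t in x i..x (i + 1), (Dv i).eval t ^ 2)) * (√(b - a) * V) :=
          mul_le_mul hM (hp.sum_integral_abs_le fun i _ => by fun_prop)
            (Finset.sum_nonneg fun j hj => intervalIntegral.integral_nonneg
              (hp.le_succ (Finset.mem_range.mp hj)) fun _ _ => abs_nonneg _)
            (by positivity)
      _ = _ := by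
        rw [mul_mul_mul_comm, Real.mul_self_sqrt (sub_nonneg.mpr hp.lt.le)]
        ring
  simpa only [one_mul] using mul_le_of_mul_mul_self_le (c := 1) (Real.sqrt_nonneg _)
    (mul_nonneg (sub_nonneg.mpr hp.lt.le) (Real.sqrt_nonneg _)) (by rwa [one_mul])

theorem ContDiffOn.integral_derivWithin_eq_sub {g : ℝ → ℝ} {a b c d : ℝ}
    (hg : ContDiffOn ℝ 1 g (Icc a b)) (hcd : c ≤ d) (hsub : Icc c d ⊆ Icc a b) :
    ∫ t in c..d, derivWithin g (Icc a b) t = g d - g c := by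
  rw [← intervalIntegral.integral_derivWithin_Icc_of_contDiffOn_Icc (hg.mono hsub) hcd]
  refine intervalIntegral.integral_congr_Ioo_of_le hcd fun t ht => ?_
  rw [derivWithin_of_mem_nhds (Icc_mem_nhds ht.1 ht.2),
    derivWithin_of_mem_nhds (Filter.mem_of_superset (Icc_mem_nhds ht.1 ht.2) hsub)]

/-- `ph i` interpolates `g` at both ends of its element, so the nodal terms telescope to
`v(b) g(b) - v(a) g(a) = 0`. -/
theorem sum_integral_flux_consistency {k N : ℕ} {a b : ℝ} {x : ℕ → ℝ}
    (hp : IsPartition N a b x)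
    {a0 f u g : ℝ → ℝ} (hg : ContDiffOn ℝ 1 g (Icc a b)) (hgb : g b = 0)
    (hpde : ∀ t ∈ Ioo a b, -derivWithin g (Icc a b) t + a0 t * u t = f t)
    (ha0 : ContinuousOn a0 (Icc a b)) (hu : ContinuousOn u (Icc a b)) {ph : ℕ → ℝ[X]}
    (hph : ∀ i < N - 1, (ph i).degree ≤ ((k + 1 : ℕ) : WithBot ℕ) ∧
      (ph i).eval (x i) = g (x i) ∧
      ∀ q : ℝ[X], q.degree ≤ (k : WithBot ℕ) →
        ∫ t in x i..x (i + 1), (ph i).derivative.eval t * q.eval t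
          = ∫ t in x i..x (i + 1), derivWithin g (Icc a b) t * q.eval t)
    {v0 : ℕ → ℝ[X]} {vn : ℕ → ℝ} {Dv : ℕ → ℝ[X]} (hv : MemSh k N v0 vn)
    (hDv : IsWeakDerivFam (k + 1) N x v0 vn Dv) :
    (∑ i ∈ Finset.range (N - 1), ∫ t in x i..x (i + 1), (ph i).eval t * (Dv i).eval t)
      + ∑ i ∈ Finset.range (N - 1), ∫ t in x i..x (i + 1), a0 t * u t * (v0 i).eval t
      = ∑ i ∈ Finset.range (N - 1), ∫ t in x i..x (i + 1), f t * (v0 i).eval t := by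
  have hg' : ContinuousOn (derivWithin g (Icc a b)) (Icc a b) :=
    hg.continuousOn_derivWithin (uniqueDiffOn_Icc hp.lt) le_rfl
  have helem : ∀ i < N - 1,
      (∫ t in x i..x (i + 1), (ph i).eval t * (Dv i).eval t)
        + (∫ t in x i..x (i + 1), a0 t * u t * (v0 i).eval t)
        - ∫ t in x i..x (i + 1), f t * (v0 i).eval t
      = vn (i + 1) * g (x (i + 1)) - vn i * g (x i) := by
    intro i hi
    obtain ⟨hdeg, hleft, hproj⟩ := hph i hi
    have hright : (ph i).eval (x (i + 1)) = g (x (i + 1)) := by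
      have h1 := (ph i).integral_eval_derivative (x i) (x (i + 1))
      have h2 := hproj 1 (degree_one_le.trans (by exact_mod_cast Nat.zero_le k))
      simp only [eval_one, mul_one] at h2
      rw [h2, hg.integral_derivWithin_eq_sub (hp.le_succ hi) (hp.Icc_subset hi), hleft] at h1
      linarith
    have hcons := (hDv i hi).integral_mul_add_integral_mul (hv.1 i hi) hdeg hproj
    have hf : ∫ t in x i..x (i + 1), f t * (v0 i).eval t
        = (∫ t in x i..x (i + 1), a0 t * u t * (v0 i).eval t)
          - ∫ t in x i..x (i + 1), derivWithin g (Icc a b) t * (v0 i).eval t := by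
      rw [← intervalIntegral.integral_sub (hp.intervalIntegrable (by fun_prop) hi)
        (hp.intervalIntegrable (by fun_prop) hi)]
      refine intervalIntegral.integral_congr_Ioo_of_le (hp.le_succ hi) fun t ht => ?_
      rw [← hpde t (hp.Ioo_subset hi ht)]
      ring
    rw [hf, ← hleft, ← hright]
    linarith
  have hsum := Finset.sum_congr rfl fun i hi => helem i (Finset.mem_range.mp hi)
  rw [Finset.sum_range_sub (fun i => vn i * g (x i)), hp.2.2.1, hgb, hv.2,
    Finset.sum_sub_distrib, Finset.sum_add_distrib] at hsum
  linarith

theorem error_equation {k N : ℕ} {a b : ℝ} {x : ℕ → ℝ} (hp : IsPartition N a b x)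
    {a2 a0 f u g : ℝ → ℝ} (ha2 : ContinuousOn a2 (Icc a b)) (ha0 : ContinuousOn a0 (Icc a b))
    (hu : ContinuousOn u (Icc a b)) (hg : ContDiffOn ℝ 1 g (Icc a b)) (hgb : g b = 0)
    (hpde : ∀ t ∈ Ioo a b, -derivWithin g (Icc a b) t + a0 t * u t = f t)
    {u0 : ℕ → ℝ[X]} {un : ℕ → ℝ} {Du : ℕ → ℝ[X]}
    (hsol : IsWFESol k (k + 1) N x a2 a0 f u0 un Du)
    (Pk Dq : ℕ → ℝ[X]) {ph : ℕ → ℝ[X]}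
    (hph : ∀ i < N - 1, (ph i).degree ≤ ((k + 1 : ℕ) : WithBot ℕ) ∧
      (ph i).eval (x i) = g (x i) ∧
      ∀ q : ℝ[X], q.degree ≤ (k : WithBot ℕ) →
        ∫ t in x i..x (i + 1), (ph i).derivative.eval t * q.eval t
          = ∫ t in x i..x (i + 1), derivWithin g (Icc a b) t * q.eval t)
    {v0 : ℕ → ℝ[X]} {vn : ℕ → ℝ} {Dv : ℕ → ℝ[X]} (hv : MemSh k N v0 vn)
    (hDv : IsWeakDerivFam (k + 1) N x v0 vn Dv) :
    (∑ i ∈ Finset.range (N - 1), ∫ t in x i..x (i + 1),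
        a2 t * (Dq i - Du i).eval t * (Dv i).eval t)
      + ∑ i ∈ Finset.range (N - 1), ∫ t in x i..x (i + 1),
        a0 t * (Pk i - u0 i).eval t * (v0 i).eval t
      = (∑ i ∈ Finset.range (N - 1), ∫ t in x i..x (i + 1),
          (a2 t * (Dq i).eval t - (ph i).eval t) * (Dv i).eval t)
        + ∑ i ∈ Finset.range (N - 1), ∫ t in x i..x (i + 1),
          (a0 t * ((Pk i).eval t - u t)) * (v0 i).eval t := by
  have hscheme := hsol.2.2 v0 vn Dv hv hDv
  have hflux := sum_integral_flux_consistency hp hg hgb hpde ha0 hu hph hv hDv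
  simp only [eval_sub, mul_sub, sub_mul]
  rw [hp.sum_integral_sub (fun i _ => by fun_prop) (fun i _ => by fun_prop),
    hp.sum_integral_sub (fun i _ => by fun_prop) (fun i _ => by fun_prop),
    hp.sum_integral_sub (fun i _ => by fun_prop) (fun i _ => by fun_prop),
    hp.sum_integral_sub (fun i _ => by fun_prop) (fun i _ => by fun_prop)]
  linarith

theorem error_inequality_general (k : ℕ) (a b amin : ℝ) (hab : a < b)
    (a2 a0 f u : ℝ → ℝ)
    (ha2 : ContDiffOn ℝ 1 a2 (Set.Icc a b)) (ha2lb : ∀ t ∈ Set.Icc a b, amin ≤ a2 t)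
    (ha0c : ContinuousOn a0 (Set.Icc a b)) (ha0nn : ∀ t ∈ Set.Icc a b, 0 ≤ a0 t)
    (hu : ContDiffOn ℝ 2 u (Set.Icc a b))
    (hbvp : SolvesBVP a b a2 a0 f u)
    (N : ℕ) (x : ℕ → ℝ) (hpart : IsPartition N a b x)
    (u0 : ℕ → Polynomial ℝ) (un : ℕ → ℝ) (Du : ℕ → Polynomial ℝ)
    (hsol : IsWFESol k (k + 1) N x a2 a0 f u0 un Du)
    (Pk : ℕ → Polynomial ℝ) (hPk : ∀ i < N - 1, IsL2Proj k (x i) (x (i + 1)) u (Pk i))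
    (Dq : ℕ → Polynomial ℝ)
    (hDq : ∀ i < N - 1, IsWeakDeriv (k + 1) (x i) (x (i + 1)) (fun t => (Pk i).eval t)
      (u (x i)) (u (x (i + 1))) (Dq i))
    (ph : ℕ → Polynomial ℝ)
    (hph : ∀ i < N - 1, (ph i).degree ≤ ((k + 1 : ℕ) : WithBot ℕ) ∧
      (ph i).eval (x i) = a2 (x i) * derivWithin u (Set.Icc a b) (x i) ∧
      ∀ q : Polynomial ℝ, q.degree ≤ (k : WithBot ℕ) →
        (∫ t in x i..x (i + 1), (ph i).derivative.eval t * q.eval t)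
          = ∫ t in x i..x (i + 1),
              derivWithin (fun s => a2 s * derivWithin u (Set.Icc a b) s) (Set.Icc a b) t
                * q.eval t) :
    amin * Real.sqrt (∑ i ∈ Finset.range (N - 1),
        ∫ t in x i..x (i + 1), ((Dq i).eval t - (Du i).eval t) ^ 2)
      ≤ Real.sqrt (∑ i ∈ Finset.range (N - 1),
          ∫ t in x i..x (i + 1), (a2 t * (Dq i).eval t - (ph i).eval t) ^ 2)
        + ((b - a) + 1) * Real.sqrt (∑ i ∈ Finset.range (N - 1),
            ∫ t in x i..x (i + 1), (a0 t * ((Pk i).eval t - u t)) ^ 2) := by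
  have ha2c := ha2.continuousOn
  have huc := hu.continuousOn
  have hg : ContDiffOn ℝ 1 (fun t => a2 t * derivWithin u (Icc a b) t) (Icc a b) :=
    ha2.mul (hu.derivWithin (uniqueDiffOn_Icc hab) le_rfl)
  have hgb : a2 b * derivWithin u (Icc a b) b = 0 := by rw [hbvp.2.2, mul_zero]
  set w0 : ℕ → ℝ[X] := fun i => Pk i - u0 i
  set Dw : ℕ → ℝ[X] := fun i => Dq i - Du i
  have hw : MemSh k N w0 (fun i => u (x i) - un i) :=
    ⟨fun i hi => (degree_sub_le _ _).trans (max_le (hPk i hi).1 (hsol.1.1 i hi)),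
      by simp [hpart.2.1, hbvp.2.1, hsol.1.2]⟩
  have hDw : IsWeakDerivFam (k + 1) N x w0 _ Dw := fun i hi => (hDq i hi).sub (hsol.2.1 i hi)
  have herr := error_equation hpart ha2c ha0c huc hg hgb hbvp.1 hsol Pk Dq hph hw hDw
  have hcoer := hpart.mul_sum_integral_sq_le ha2lb ha2c Dw
  have ha0w := hpart.mul_sum_integral_sq_le ha0nn ha0c w0
  have hres1 := hpart.sum_integral_mul_le
    (F := fun i t => a2 t * (Dq i).eval t - (ph i).eval t) (G := fun i t => (Dw i).eval t)
    (fun i _ => by fun_prop) (fun i _ => by fun_prop)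
  have hres2 := hpart.sum_integral_mul_le
    (F := fun i t => a0 t * ((Pk i).eval t - u t)) (G := fun i t => (w0 i).eval t)
    (fun i _ => by fun_prop) (fun i _ => by fun_prop)
  have hpoinc := discrete_poincare hpart hw hDw
  simp only [← eval_sub]
  refine mul_le_of_mul_mul_self_le (Real.sqrt_nonneg _)
    (add_nonneg (Real.sqrt_nonneg _) (mul_nonneg (by linarith) (Real.sqrt_nonneg _))) ?_
  rw [mul_assoc, Real.mul_self_sqrt (hpart.sum_integral_sq_nonneg _)]
  have hB := Real.sqrt_nonneg (∑ i ∈ Finset.range (N - 1),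
    ∫ t in x i..x (i + 1), (a0 t * ((Pk i).eval t - u t)) ^ 2)
  have hE := Real.sqrt_nonneg
    (∑ i ∈ Finset.range (N - 1), ∫ t in x i..x (i + 1), (Dw i).eval t ^ 2)
  -- `a_min ‖d_w w‖² ≤ (a₂ d_w Q_h u - π_h g, d_w w)_h + (a₀ (Q_h⁰u - u), w⁰)`,
  -- then Cauchy–Schwarz and the Poincaré inequality
  calc _ ≤ _ := by linarith
    _ ≤ _ := add_le_add hres1 (hres2.trans (mul_le_mul_of_nonneg_left hpoinc hB))
    _ ≤ _ := by nlinarith [mul_nonneg hB hE]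

/-- Theorem 4.3. Let `k ≥ 0`, `r = k + 1`. Suppose `a2 ∈ C¹([a,b])` with
`a2 ≥ a_min > 0`, `a0` continuous and nonnegative, `u ∈ C²([a,b])` solves the boundary value
problem, and `u_h ∈ S_h` is the weak finite element solution. With `Pk i = P_h^k u`,
`Dq i = d_{w,r} Q_h u` and `ph i` the pieces of `π_h (a2 u')` on the `i`-th element,
`a_min ‖d_{w,r}Q_h u − d_{w,r}u_h‖_h ≤ ‖a2 d_{w,r}Q_h u − π_h(a2 u')‖_h
  + ((b−a)+1) ‖a0 (Q_h⁰ u − u)‖_{L²(a,b)}`. -/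
theorem error_inequality (k : ℕ) (a b amin : ℝ) (hab : a < b) (hamin : 0 < amin)
    (a2 a0 f u : ℝ → ℝ)
    (ha2 : ContDiffOn ℝ 1 a2 (Set.Icc a b)) (ha2lb : ∀ t ∈ Set.Icc a b, amin ≤ a2 t)
    (ha0c : ContinuousOn a0 (Set.Icc a b)) (ha0nn : ∀ t ∈ Set.Icc a b, 0 ≤ a0 t)
    (hu : ContDiffOn ℝ 2 u (Set.Icc a b))
    (hbvp : SolvesBVP a b a2 a0 f u)
    (N : ℕ) (x : ℕ → ℝ) (hpart : IsPartition N a b x)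
    (u0 : ℕ → Polynomial ℝ) (un : ℕ → ℝ) (Du : ℕ → Polynomial ℝ)
    (hsol : IsWFESol k (k + 1) N x a2 a0 f u0 un Du)
    (Pk : ℕ → Polynomial ℝ) (hPk : ∀ i < N - 1, IsL2Proj k (x i) (x (i + 1)) u (Pk i))
    (Dq : ℕ → Polynomial ℝ)
    (hDq : ∀ i < N - 1, IsWeakDeriv (k + 1) (x i) (x (i + 1)) (fun t => (Pk i).eval t)
      (u (x i)) (u (x (i + 1))) (Dq i))
    (ph : ℕ → Polynomial ℝ)
    (hph : ∀ i < N - 1, (ph i).degree ≤ ((k + 1 : ℕ) : WithBot ℕ) ∧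
      (ph i).eval (x i) = a2 (x i) * derivWithin u (Set.Icc a b) (x i) ∧
      ∀ q : Polynomial ℝ, q.degree ≤ (k : WithBot ℕ) →
        (∫ t in x i..x (i + 1), (ph i).derivative.eval t * q.eval t)
          = ∫ t in x i..x (i + 1),
              derivWithin (fun s => a2 s * derivWithin u (Set.Icc a b) s) (Set.Icc a b) t
                * q.eval t) :
    amin * Real.sqrt (∑ i ∈ Finset.range (N - 1),
        ∫ t in x i..x (i + 1), ((Dq i).eval t - (Du i).eval t) ^ 2)
      ≤ Real.sqrt (∑ i ∈ Finset.range (N - 1),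
          ∫ t in x i..x (i + 1), (a2 t * (Dq i).eval t - (ph i).eval t) ^ 2)
        + ((b - a) + 1) * Real.sqrt (∑ i ∈ Finset.range (N - 1),
            ∫ t in x i..x (i + 1), (a0 t * ((Pk i).eval t - u t)) ^ 2) :=
  error_inequality_general k a b amin hab a2 a0 f u ha2 ha2lb ha0c ha0nn hu hbvp N x hpart u0 un Du
    hsol Pk hPk Dq hDq ph hph
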